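/- arXiv:2403.02275 — 4 statements merged into one kernel-verified Lean document; each statement's English description precedes it below -/
import Mathlib

section
/- Let G = (L ⊔ R, E) be an (r, Δ, c)-boundary expander with c > 0 and let J ⊆ R with |J| ≤ cr/2. Then the (r, J)-contained set of maximal size is unique: any two (r, J)-contained sets of maximal size are equal. -/
open Finset

variable {L R : Type*} [Fintype L] [Fintype R] [DecidableEq L] [DecidableEq R]

/-- The set of neighbours of `I ⊆ L` in the bipartite graph with adjacency `A`. -/
def nbhd (A : L → R → Prop) [∀ a b, Decidable (A a b)] (I : Finset L) : Finset R :=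
  Finset.univ.filter (fun b => ∃ a ∈ I, A a b)

/-- The boundary of `I ⊆ L`: vertices of `R` adjacent to exactly one vertex of `I`. -/
def bdry (A : L → R → Prop) [∀ a b, Decidable (A a b)] (I : Finset L) : Finset R :=
  Finset.univ.filter (fun b => (I.filter (fun a => A a b)).card = 1)

/-- Degree of a left vertex. -/
def ldeg (A : L → R → Prop) [∀ a b, Decidable (A a b)] (a : L) : ℕ :=
  (Finset.univ.filter (fun b => A a b)).card

/-- `(r, Δ, c)`-boundary expander. -/
def IsBoundaryExpander (A : L → R → Prop) [∀ a b, Decidable (A a b)] (r Δ : ℕ) (c : ℝ) : Prop :=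
  (∀ a : L, ldeg A a ≤ Δ) ∧
  ∀ I : Finset L, I.card ≤ r → c * I.card ≤ ((bdry A I).card : ℝ)

/-- `I` is `(r, J)`-contained: `|I| ≤ r` and `∂(I) ⊆ J`. -/
def IsContained (A : L → R → Prop) [∀ a b, Decidable (A a b)] (r : ℕ) (J : Finset R) (I : Finset L) : Prop :=
  I.card ≤ r ∧ bdry A I ⊆ J

/-- `I` is a closure of `J`: an `(r, J)`-contained set of maximal size. -/
def IsClosure (A : L → R → Prop) [∀ a b, Decidable (A a b)] (r : ℕ) (J : Finset R) (I : Finset L) : Prop :=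
  IsContained A r J I ∧ ∀ I' : Finset L, IsContained A r J I' → I'.card ≤ I.card

/-- `(r, Δ, c)`-weak (boundary) expander. -/
def IsWeakExpander (A : L → R → Prop) [∀ a b, Decidable (A a b)] (r Δ : ℕ) (c : ℝ) : Prop :=
  (∀ a : L, ldeg A a ≤ Δ) ∧
  (∀ I : Finset L, I.Nonempty → (I.card : ℝ) ≤ r / 2 → (bdry A I).Nonempty) ∧
  (∀ I : Finset L, (r : ℝ) / 2 < I.card → I.card ≤ r → c * I.card ≤ ((bdry A I).card : ℝ))

/-!
A closure `I` of `J` has `2|I| ≤ r`: expansion gives `c|I| ≤ |∂(I)| ≤ |J| ≤ cr/2`. Hence the union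
of two closures still has size at most `r`, and since `∂(I₁ ∪ I₂) ⊆ ∂(I₁) ∪ ∂(I₂) ⊆ J` it is
`(r, J)`-contained. Maximality of `|I₁|` and `|I₂|` then forces `I₁ = I₁ ∪ I₂ = I₂`.
-/

omit [Fintype L] in
theorem bdry_union_subset (A : L → R → Prop) [∀ a b, Decidable (A a b)] (I₁ I₂ : Finset L) :
    bdry A (I₁ ∪ I₂) ⊆ bdry A I₁ ∪ bdry A I₂ := by
  intro b hb
  simp only [bdry, mem_union, mem_filter, mem_univ, true_and, filter_union] at hb ⊢
  obtain ⟨a, ha⟩ := card_eq_one.mp hb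
  rcases subset_singleton_iff.mp (ha ▸ subset_union_left) with h | h
  · rw [h, empty_union] at ha
    simp [ha]
  · simp [h]

section

variable {A : L → R → Prop} [∀ a b, Decidable (A a b)] {r : ℕ} {J : Finset R} {I I₁ I₂ : Finset L}

omit [Fintype L] in
theorem IsContained.union (h₁ : IsContained A r J I₁) (h₂ : IsContained A r J I₂)
    (hcard : (I₁ ∪ I₂).card ≤ r) : IsContained A r J (I₁ ∪ I₂) :=
  ⟨hcard, (bdry_union_subset A I₁ I₂).trans (union_subset h₁.2 h₂.2)⟩

omit [Fintype L] [DecidableEq L] [DecidableEq R] in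
theorem IsContained.two_mul_card_le {Δ : ℕ} {c : ℝ} (hc : 0 < c)
    (hexp : IsBoundaryExpander A r Δ c) (hJ : (J.card : ℝ) ≤ c * r / 2)
    (hI : IsContained A r J I) : 2 * I.card ≤ r := by
  have hexpI : c * I.card ≤ c * r / 2 :=
    calc c * I.card ≤ (bdry A I).card := hexp.2 I hI.1
      _ ≤ J.card := by exact_mod_cast card_le_card hI.2
      _ ≤ c * r / 2 := hJ
  have : ((2 * I.card : ℕ) : ℝ) ≤ r := by
    push_cast
    exact le_of_mul_le_mul_left (by linarith) hc
  exact_mod_cast this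

omit [Fintype L] [DecidableEq R] in
theorem IsClosure.eq_of_isContained_union (h₁ : IsClosure A r J I₁) (h₂ : IsClosure A r J I₂)
    (hU : IsContained A r J (I₁ ∪ I₂)) : I₁ = I₂ :=
  (eq_of_subset_of_card_le subset_union_left (h₁.2 _ hU)).trans
    (eq_of_subset_of_card_le subset_union_right (h₂.2 _ hU)).symm

end

/-- In an `(r, Δ, c)`-boundary expander, for `|J| ≤ cr/2` the
`(r, J)`-contained set of maximal size is unique. -/
theorem closure_unique (A : L → R → Prop) [∀ a b, Decidable (A a b)]
    (r Δ : ℕ) (c : ℝ) (hc : 0 < c)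
    (hexp : IsBoundaryExpander A r Δ c)
    (J : Finset R) (hJ : (J.card : ℝ) ≤ c * r / 2)
    (I₁ I₂ : Finset L) (h₁ : IsClosure A r J I₁) (h₂ : IsClosure A r J I₂) :
    I₁ = I₂ := by
  refine h₁.eq_of_isContained_union h₂ (h₁.1.union h₂.1 ?_)
  have hsmall₁ := h₁.1.two_mul_card_le hc hexp hJ
  have hsmall₂ := h₂.1.two_mul_card_le hc hexp hJ
  have := card_union_le I₁ I₂
  omega
end

section
/- Let G = (L ⊔ R, E) be an (r, Δ, c)-boundary expander with c > 0, and let J' ⊆ J ⊆ R with |J| ≤ cr/2. Then the closure of J' is contained in the closure of J, where the closure of a set S ⊆ R is the unique (r, S)-contained subset of L of maximal size. -/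
open Finset

variable {L R : Type*} [Fintype L] [Fintype R] [DecidableEq L] [DecidableEq R]

/-!
Expansion bounds every `(r, J)`-contained set by `|J| / c ≤ r / 2`, so the union of two of them
has size at most `r`; since a unique neighbour of a union is a unique neighbour of one of the parts,
the union is again `(r, J)`-contained. Apply this to `Cl(J') ∪ Cl(J)`: maximality of `Cl(J)`
forces the union to be `Cl(J)` itself.
-/

section Closure

variable {L R : Type*} [Fintype R] {A : L → R → Prop} [∀ a b, Decidable (A a b)]
  {r Δ : ℕ} {c : ℝ} {J J' : Finset R} {I K : Finset L}

lemma bdry_union_subset_s2 [DecidableEq L] [DecidableEq R] :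
    bdry A (I ∪ K) ⊆ bdry A I ∪ bdry A K := by
  intro b hb
  simp only [bdry, mem_filter, mem_univ, true_and, mem_union, filter_union] at hb ⊢
  set S := I.filter (A · b)
  set T := K.filter (A · b)
  have hS := card_le_card (subset_union_left : S ⊆ S ∪ T)
  have hT := card_le_card (subset_union_right : T ⊆ S ∪ T)
  have := card_union_le S T
  omega

lemma IsContained.mono_right (hI : IsContained A r J' I) (hJJ : J' ⊆ J) :
    IsContained A r J I :=
  ⟨hI.1, hI.2.trans hJJ⟩

lemma IsContained.card_le_half (hc : 0 < c) (hexp : IsBoundaryExpander A r Δ c)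
    (hJ : (J.card : ℝ) ≤ c * r / 2) (hI : IsContained A r J I) :
    (I.card : ℝ) ≤ r / 2 := by
  have hbdry : ((bdry A I).card : ℝ) ≤ J.card := by exact_mod_cast card_le_card hI.2
  have : c * I.card ≤ c * (r / 2) := by linarith [hexp.2 I hI.1]
  exact le_of_mul_le_mul_left this hc

lemma IsContained.union_s2 [DecidableEq L] [DecidableEq R] (hc : 0 < c)
    (hexp : IsBoundaryExpander A r Δ c) (hJ : (J.card : ℝ) ≤ c * r / 2)
    (hI : IsContained A r J I) (hK : IsContained A r J K) :
    IsContained A r J (I ∪ K) := by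
  refine ⟨?_, bdry_union_subset_s2.trans (union_subset hI.2 hK.2)⟩
  have hcard : ((I ∪ K).card : ℝ) ≤ I.card + K.card := by exact_mod_cast card_union_le I K
  have := hI.card_le_half hc hexp hJ
  have := hK.card_le_half hc hexp hJ
  exact_mod_cast (by linarith : ((I ∪ K).card : ℝ) ≤ r)

lemma IsClosure.subset_of_isContained_union [DecidableEq L] (hI : IsClosure A r J I)
    (hKI : IsContained A r J (K ∪ I)) : K ⊆ I := by
  have hunion : K ∪ I = I := (eq_of_subset_of_card_le subset_union_right (hI.2 _ hKI)).symm
  exact hunion ▸ subset_union_left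

end Closure

/-- In an `(r, Δ, c)`-boundary expander, for `J' ⊆ J` with `|J| ≤ cr/2`,
the closure of `J'` is contained in the closure of `J`. -/
theorem closure_monotone (A : L → R → Prop) [∀ a b, Decidable (A a b)]
    (r Δ : ℕ) (c : ℝ) (hc : 0 < c)
    (hexp : IsBoundaryExpander A r Δ c)
    (J' J : Finset R) (hJJ : J' ⊆ J) (hJ : (J.card : ℝ) ≤ c * r / 2)
    (I' I : Finset L) (h' : IsClosure A r J' I') (h : IsClosure A r J I) :
    I' ⊆ I :=
  h.subset_of_isContained_union <| (h'.1.mono_right hJJ).union_s2 hc hexp hJ h.1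
end

section
/- Let G = (L ⊔ R, E) be an (r, Δ, c)-weak expander, i.e., all left-degrees are ≤ Δ, every I ⊆ L with 0 < |I| ≤ r/2 has nonempty boundary, and every I ⊆ L with r/2 < |I| ≤ r has |∂(I)| ≥ c|I|. If I ⊆ L is a closure of J ⊆ R (an (r, J)-contained set of maximal size), then |I| ≤ max(|J|/c, r/2). -/
open Finset

variable {L R : Type*} [Fintype L] [Fintype R] [DecidableEq L] [DecidableEq R]

theorem IsWeakExpander.card_le_div_of_isContained {L R : Type*} [Fintype R]
    {A : L → R → Prop} [∀ a b, Decidable (A a b)] {r Δ : ℕ} {c : ℝ}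
    (hexp : IsWeakExpander A r Δ c) (hc : 0 < c) {J : Finset R} {I : Finset L}
    (hI : IsContained A r J I) (hlarge : (r : ℝ) / 2 < I.card) :
    (I.card : ℝ) ≤ J.card / c := by
  have hJ : ((bdry A I).card : ℝ) ≤ J.card := by exact_mod_cast card_le_card hI.2
  rw [le_div_iff₀' hc]
  exact (hexp.2.2 I hlarge hI.1).trans hJ

/-- In an `(r, Δ, c)`-weak expander, any closure `I` of `J ⊆ R`
satisfies `|I| ≤ max (|J|/c) (r/2)`. -/
theorem weak_closure_card_le (A : L → R → Prop) [∀ a b, Decidable (A a b)]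
    (r Δ : ℕ) (c : ℝ) (hc : 0 < c)
    (hexp : IsWeakExpander A r Δ c)
    (J : Finset R) (I : Finset L) (hI : IsClosure A r J I) :
    (I.card : ℝ) ≤ max ((J.card : ℝ) / c) ((r : ℝ) / 2) := by
  rcases le_or_gt (I.card : ℝ) ((r : ℝ) / 2) with hsmall | hlarge
  · exact le_max_of_le_right hsmall
  · exact le_max_of_le_left (hexp.card_le_div_of_isContained hc hI.1 hlarge)
end

section
/- Let G = (L ⊔ R, E) be an (r, Δ, c)-weak expander with c > 0 and let J ⊆ R with |J| ≤ cr/2. Then |Ext(J)| ≤ |J| + Δ·|Cl(J)| ≤ |J| + Δ·max(|J|/c, r/2). -/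
open Finset

variable {L R : Type*} [Fintype L] [Fintype R] [DecidableEq L] [DecidableEq R]

/-- In an `(r, Δ, c)`-weak expander, for `|J| ≤ cr/2`,
`|Ext(J)| ≤ |J| + Δ·|Cl(J)| ≤ |J| + Δ·max(|J|/c, r/2)`. -/
theorem extension_card_le (A : L → R → Prop) [∀ a b, Decidable (A a b)]
    (r Δ : ℕ) (c : ℝ) (hc : 0 < c)
    (hexp : IsWeakExpander A r Δ c)
    (J : Finset R) (hJ : (J.card : ℝ) ≤ c * r / 2)
    (I : Finset L) (hI : IsClosure A r J I) :
    (J ∪ nbhd A I).card ≤ J.card + Δ * I.card ∧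
    (J.card : ℝ) + Δ * I.card ≤ J.card + Δ * max ((J.card : ℝ) / c) ((r : ℝ) / 2) := by
  obtain ⟨⟨hIr, hIbd⟩, _⟩ := hI
  constructor
  · refine le_trans (card_union_le _ _) (Nat.add_le_add_left ?_ _)
    have hsub : nbhd A I ⊆ I.biUnion (fun a => univ.filter (A a ·)) := by
      intro b hb
      simp only [nbhd, mem_filter, mem_univ, true_and] at hb
      obtain ⟨a, ha, hab⟩ := hb
      exact mem_biUnion.2 ⟨a, ha, by simp [hab]⟩
    calc (nbhd A I).card ≤ (I.biUnion (fun a => univ.filter (A a ·))).card :=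
          card_le_card hsub
      _ ≤ ∑ a ∈ I, (univ.filter (A a ·)).card := card_biUnion_le
      _ ≤ ∑ _a ∈ I, Δ := Finset.sum_le_sum (fun a _ => hexp.1 a)
      _ = Δ * I.card := by rw [Finset.sum_const, smul_eq_mul, mul_comm]
  · have hIcard : (I.card : ℝ) ≤ max ((J.card : ℝ) / c) ((r : ℝ) / 2) := by
      rcases le_or_gt (I.card : ℝ) ((r : ℝ) / 2) with h | h
      · exact le_max_of_le_right h
      · have hexpI := hexp.2.2 I h hIr
        have hbJ : ((bdry A I).card : ℝ) ≤ J.card :=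
          Nat.cast_le.2 (card_le_card hIbd)
        refine le_max_of_le_left ?_
        rw [le_div_iff₀ hc, mul_comm]
        exact hexpI.trans hbJ
    have : (Δ : ℝ) * I.card ≤ Δ * max ((J.card : ℝ) / c) ((r : ℝ) / 2) :=
      mul_le_mul_of_nonneg_left hIcard (Nat.cast_nonneg Δ)
    linarith
end
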